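/- arXiv:2012.14527 — 2 statements merged into one kernel-verified Lean document; each statement's English description precedes it below -/
import Mathlib

section
/- Let d ≥ 2 and let l be a point of the unsquared measurement variety L_{d,n} ⊆ ℂ^N that is generic over ℚ. If α ∈ ℚ^N is a rational length functional with ⟨α, l⟩ = 0 (i.e., Σ_{ij} α^{ij} l_{ij} = 0), then α = 0. -/
open MvPolynomial

noncomputable section

/-- Edges of the complete graph on `n` vertices, as ordered pairs `i < j`. -/
abbrev Edge (n : ℕ) := {e : Fin n × Fin n // e.1 < e.2}

/-- The unsquared measurement variety `L_{d,n}`: vectors indexed by edges whose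
coordinatewise squares are the complex squared distances of some configuration
of `n` points in `ℂ^d`. -/
def Ldn (d n : ℕ) : Set (Edge n → ℂ) :=
  {x | ∃ q : Fin n → Fin d → ℂ,
    ∀ e : Edge n, (x e) ^ 2 = ∑ a, (q e.1.1 a - q e.1.2 a) ^ 2}

/-! By genericity the rational linear relation `⟨α, l⟩ = 0` holds on all of `L_{d,n}`. This
variety contains a point `x` with no zero coordinate and is stable under negating a single
coordinate; negating `x e` changes `⟨α, x⟩` by `2 α_e x_e`, so every `α_e` vanishes. -/

theorem eq_zero_of_forall_sum_mul_eq_zero {ι K : Type*} [Fintype ι] [DecidableEq ι] [Field K]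
    [NeZero (2 : K)] {S : Set (ι → K)} (hS : ∀ x ∈ S, ∀ i, Function.update x i (-x i) ∈ S)
    {x : ι → K} (hx : x ∈ S) (hx0 : ∀ i, x i ≠ 0) (c : ι → K)
    (hc : ∀ y ∈ S, ∑ i, c i * y i = 0) : c = 0 := by
  funext i
  have hflip : ∑ j, c j * Function.update x i (-x i) j = ∑ j, c j * x j - 2 * (c i * x i) := by
    rw [eq_sub_iff_add_eq, ← Finset.add_sum_erase _ _ (Finset.mem_univ i),
      ← Finset.add_sum_erase _ _ (Finset.mem_univ i),
      Finset.sum_congr rfl fun j hj => by rw [Function.update_of_ne (Finset.ne_of_mem_erase hj)]]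
    simp only [Function.update_self]
    ring
  have h2 : 2 * (c i * x i) = 0 := by
    have := hflip ▸ hc _ (hS x hx i)
    rwa [hc x hx, zero_sub, neg_eq_zero] at this
  simpa [hx0 i, two_ne_zero] using h2

theorem mem_Ldn_of_sq_eq {d n : ℕ} {x y : Edge n → ℂ} (hx : x ∈ Ldn d n)
    (hxy : ∀ e, y e ^ 2 = x e ^ 2) : y ∈ Ldn d n := by
  obtain ⟨q, hq⟩ := hx
  exact ⟨q, fun e => (hxy e).trans (hq e)⟩

theorem update_neg_mem_Ldn {d n : ℕ} {x : Edge n → ℂ} (hx : x ∈ Ldn d n) (e : Edge n) :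
    Function.update x e (-x e) ∈ Ldn d n := by
  refine mem_Ldn_of_sq_eq hx fun e' => ?_
  rcases eq_or_ne e' e with rfl | h
  · simp
  · rw [Function.update_of_ne h]

-- The witness is the collinear configuration `i ↦ i • e₀`.
theorem exists_mem_Ldn_forall_ne_zero {d n : ℕ} (hd : 0 < d) :
    ∃ x ∈ Ldn d n, ∀ e, x e ≠ 0 := by
  let a₀ : Fin d := ⟨0, hd⟩
  refine ⟨fun e => (e.1.1 : ℂ) - e.1.2, ⟨fun i a => if a = a₀ then (i : ℂ) else 0, fun e => ?_⟩,
    fun e => ?_⟩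
  · rw [Finset.sum_eq_single a₀ (fun a _ ha => by simp [ha]) (by simp)]
    simp
  · rw [sub_ne_zero, Ne, Nat.cast_inj, Fin.val_inj]
    exact e.2.ne

theorem forall_mem_Ldn_sum_mul_eq_zero_of_generic {d n : ℕ} {l : Edge n → ℂ}
    (hgen : ∀ f : MvPolynomial (Edge n) ℚ,
      eval l (map (algebraMap ℚ ℂ) f) = 0 →
      ∀ x ∈ Ldn d n, eval x (map (algebraMap ℚ ℂ) f) = 0)
    (α : Edge n → ℚ) (hα : ∑ e, (α e : ℂ) * l e = 0) :
    ∀ x ∈ Ldn d n, ∑ e, (α e : ℂ) * x e = 0 := by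
  have heval : ∀ x : Edge n → ℂ,
      eval x (map (algebraMap ℚ ℂ) (∑ e, C (α e) * X e)) = ∑ e, (α e : ℂ) * x e := by
    intro x
    simp [map_sum]
  intro x hx
  rw [← heval] at hα ⊢
  exact hgen _ hα x hx

theorem stmt15_general {d n : ℕ} (hd : 2 ≤ d)
    (l : Edge n → ℂ)
    (hgen : ∀ f : MvPolynomial (Edge n) ℚ,
      eval l (map (algebraMap ℚ ℂ) f) = 0 →
      ∀ x ∈ Ldn d n, eval x (map (algebraMap ℚ ℂ) f) = 0)
    (α : Edge n → ℚ)
    (hα : ∑ e, (α e : ℂ) * l e = 0) :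
    α = 0 := by
  obtain ⟨x, hx, hx0⟩ := exists_mem_Ldn_forall_ne_zero (d := d) (n := n) (by omega)
  have hαℂ : (fun e => (α e : ℂ)) = 0 :=
    eq_zero_of_forall_sum_mul_eq_zero (fun y hy => update_neg_mem_Ldn hy) hx hx0 _
      (forall_mem_Ldn_sum_mul_eq_zero_of_generic hgen α hα)
  funext e
  exact Rat.cast_eq_zero.mp (congrFun hαℂ e)

/-- For `d ≥ 2`: if `l` is generic over `ℚ` in `L_{d,n}` and a rational length
functional `α` satisfies `⟨α, l⟩ = 0`, then `α = 0`. -/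
theorem stmt15 {d n : ℕ} (hd : 2 ≤ d)
    (l : Edge n → ℂ) (hl : l ∈ Ldn d n)
    (hgen : ∀ f : MvPolynomial (Edge n) ℚ,
      eval l (map (algebraMap ℚ ℂ) f) = 0 →
      ∀ x ∈ Ldn d n, eval x (map (algebraMap ℚ ℂ) f) = 0)
    (α : Edge n → ℚ)
    (hα : ∑ e, (α e : ℂ) * l e = 0) :
    α = 0 :=
  stmt15_general hd l hgen α hα
end
end

section
/- Let p be a generic configuration of n points in ℝ^d with d ≥ 2, let α₁, ..., α_k ∈ ℚ^N be rational length functionals, and set vᵢ = ⟨αᵢ, l(p)⟩ where l(p) is the vector of pairwise distances of p. If there exist rational coefficients c¹, ..., c^k, not all zero, with Σᵢ cⁱ vᵢ = 0, then the functionals αᵢ are linearly dependent (indeed Σᵢ cⁱ αᵢ = 0). -/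
/-!
Put `β = ∑ cⁱ αᵢ`, so that `∑ₑ βₑ ℓₑ(p) = 0`. The product, over all sign patterns, of the
signed sums `∑ₑ ±βₑ ℓₑ` is invariant under each sign change, hence a rational polynomial in the
squared lengths `ℓₑ²`, i.e. in the coordinates. It vanishes at the generic `p` (the factor with
all signs `+` does), so it vanishes for every configuration. Now move only the endpoint `j` of an
edge `E = (i, j)`: by Baire one factor vanishes on an open set of positions of `j`; that factor is
analytic off the other points, a connected set when `d ≥ 2`, so it vanishes for every position.
On the line through `pᵢ` the `E`-term is `±β_E √d |t|`, while all other terms are differentiable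
at `t = 0`; hence `β_E = 0`.
-/

open MvPolynomial

noncomputable section

open Function Finset

section SignPatterns

variable {R ι : Type*} [CommRing R] [DecidableEq ι]

def signFlip (e₀ : ι) : MvPolynomial ι R →ₐ[R] MvPolynomial ι R :=
  aeval fun e => if e = e₀ then -X e else X e

lemma signFlip_monomial (e₀ : ι) (m : ι →₀ ℕ) (a : R) :
    signFlip e₀ (monomial m a) = (-1 : R) ^ m e₀ • monomial m a := by
  rw [signFlip, aeval_monomial, Finsupp.prod]
  have : ∀ e ∈ m.support, (if e = e₀ then -X e else X e) ^ m e
      = (if e = e₀ then (-1 : MvPolynomial ι R) ^ m e else 1) * X e ^ m e := by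
    intro e _
    split_ifs
    exacts [neg_pow _ _, (one_mul _).symm]
  rw [prod_congr rfl this, prod_mul_distrib, prod_ite_eq', monomial_eq, Finsupp.prod]
  split_ifs with h
  · simp only [smul_eq_C_mul, algebraMap_eq, map_pow, map_neg, map_one]; ring
  · simp [Finsupp.notMem_support_iff.1 h]

lemma coeff_signFlip (e₀ : ι) (F : MvPolynomial ι R) (m : ι →₀ ℕ) :
    coeff m (signFlip e₀ F) = (-1) ^ m e₀ * coeff m F := by
  induction F using MvPolynomial.induction_on' with
  | monomial m' a =>
    rw [signFlip_monomial, coeff_smul, coeff_monomial]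
    split_ifs with h <;> simp [h]
  | add F G hF hG => simp [hF, hG, mul_add]

lemma coeff_eq_zero_of_signFlip_eq [NoZeroDivisors R] [CharZero R] {F : MvPolynomial ι R}
    (hF : ∀ e, signFlip e F = F) {m : ι →₀ ℕ} {e : ι} (he : ¬ 2 ∣ m e) : coeff m F = 0 := by
  have := coeff_signFlip e F m
  rw [hF, (Nat.odd_iff.2 (Nat.two_dvd_ne_zero.1 he)).neg_one_pow, neg_one_mul] at this
  exact self_eq_neg.1 this

lemma exists_expand_two_eq [NoZeroDivisors R] [CharZero R] {F : MvPolynomial ι R}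
    (hF : ∀ e, signFlip e F = F) : ∃ G, expand 2 G = F := by
  have hhalf : ∀ m ∈ F.support, 2 • m.mapRange (· / 2) (Nat.zero_div 2) = m := fun m hm => by
    ext e
    have : 2 ∣ m e := by
      by_contra he
      exact mem_support_iff.1 hm (coeff_eq_zero_of_signFlip_eq hF he)
    simp [Nat.mul_div_cancel' this]
  refine ⟨∑ m ∈ F.support, monomial (m.mapRange (· / 2) (Nat.zero_div 2)) (coeff m F), ?_⟩
  simp only [map_sum, expand_monomial]
  conv_rhs => rw [← F.support_sum_monomial_coeff]
  exact sum_congr rfl fun m hm => by rw [hhalf m hm]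

def patternSign (T : Finset ι) (e : ι) : R := if e ∈ T then -1 else 1

lemma patternSign_ne_zero [Nontrivial R] (T : Finset ι) (e : ι) : patternSign T e ≠ (0 : R) := by
  unfold patternSign; split_ifs <;> simp

lemma patternSign_symmDiff_singleton (T : Finset ι) (e₀ e : ι) :
    patternSign (symmDiff T {e₀}) e
      = if e = e₀ then -patternSign T e else (patternSign T e : R) := by
  by_cases he : e = e₀
  · subst he; by_cases hT : e ∈ T <;> simp [patternSign, Finset.mem_symmDiff, hT]
  · simp [patternSign, Finset.mem_symmDiff, he]

variable [Fintype ι]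

def signedProd (β : ι → R) : MvPolynomial ι R :=
  ∏ T : Finset ι, ∑ e, C (patternSign T e * β e) * X e

lemma signFlip_signedProd (β : ι → R) (e₀ : ι) : signFlip e₀ (signedProd β) = signedProd β := by
  have hT : ∀ T : Finset ι, signFlip e₀ (∑ e, C (patternSign T e * β e) * X e)
      = ∑ e, C (patternSign (symmDiff T {e₀}) e * β e) * X e := fun T => by
    simp only [map_sum, map_mul, signFlip, aeval_C, aeval_X, algebraMap_eq,
      patternSign_symmDiff_singleton]
    refine sum_congr rfl fun e _ => ?_
    split_ifs <;> simp
  rw [signedProd, map_prod, prod_congr rfl fun T _ => hT T]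
  exact Equiv.prod_comp
    (Involutive.toPerm (symmDiff · {e₀}) fun T => symmDiff_symmDiff_cancel_right {e₀} T)
    (fun T => ∑ e, C (patternSign T e * β e) * X e)

end SignPatterns

section Genericity

def IsGeneric {σ : Type*} (x : σ → ℝ) : Prop :=
  ∀ f : MvPolynomial σ ℚ, f ≠ 0 → aeval x f ≠ 0

theorem IsGeneric.prod_sum_patternSign_mul_sqrt_eq_zero {σ ι : Type*} [Fintype ι]
    [DecidableEq ι] {p : σ → ℝ} (hp : IsGeneric p) (q : ι → MvPolynomial σ ℚ)
    (hq : ∀ (x : σ → ℝ) e, 0 ≤ aeval x (q e)) (β : ι → ℚ)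
    (h : ∑ e, (β e : ℝ) * √(aeval p (q e)) = 0) (x : σ → ℝ) :
    ∏ T : Finset ι, ∑ e, ((patternSign T e * β e : ℚ) : ℝ) * √(aeval x (q e)) = 0 := by
  obtain ⟨G, hG⟩ := exists_expand_two_eq (signFlip_signedProd β)
  have heval : ∀ x, aeval x (bind₁ q G)
      = ∏ T : Finset ι, ∑ e, ((patternSign T e * β e : ℚ) : ℝ) * √(aeval x (q e)) := fun x => by
    have : aeval x (bind₁ q G) = aeval (fun e => √(aeval x (q e))) (expand 2 G) := by
      rw [aeval_bind₁, aeval_expand]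
      congr 2
      funext e
      simp [Real.sq_sqrt (hq x e)]
    simp [this, hG, signedProd]
  have hP : bind₁ q G = 0 := by
    by_contra hne
    refine hp _ hne ?_
    rw [heval]
    exact Finset.prod_eq_zero (mem_univ ∅) (by simpa [patternSign] using h)
  rw [← heval, hP, map_zero]

end Genericity

section Geometry

variable {n d : ℕ}

def edgeLength (x : Fin n → Fin d → ℝ) (e : Edge n) : ℝ :=
  √(∑ a, (x e.1.1 a - x e.1.2 a) ^ 2)

lemma sum_sq_sub_pos {u w : Fin d → ℝ} (h : u ≠ w) : 0 < ∑ a, (u a - w a) ^ 2 := by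
  obtain ⟨a, ha⟩ := Function.ne_iff.1 h
  exact sum_pos' (fun _ _ => sq_nonneg _) ⟨a, mem_univ a, by positivity [sub_ne_zero.2 ha]⟩

@[fun_prop]
lemma continuous_edgeLength (e : Edge n) :
    Continuous fun x : Fin n → Fin d → ℝ => edgeLength x e := by
  unfold edgeLength; fun_prop

lemma contDiffAt_edgeLength {k : WithTop ℕ∞} {x : Fin n → Fin d → ℝ} {e : Edge n}
    (he : x e.1.1 ≠ x e.1.2) : ContDiffAt ℝ k (edgeLength · e) x := by
  unfold edgeLength
  exact ContDiffAt.sqrt (by fun_prop) (sum_sq_sub_pos he).ne'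

lemma edgeLength_update_add_const (x : Fin n → Fin d → ℝ) (E : Edge n) (t : ℝ) :
    edgeLength (update x E.1.2 (fun a => x E.1.1 a + t)) E = √d * |t| := by
  rw [edgeLength, update_self, update_of_ne E.2.ne]
  simp [Real.sqrt_sq_eq_abs]

lemma update_apply_ne_of_ne {x : Fin n → Fin d → ℝ} (hx : Injective x) {E e : Edge n}
    (he : e ≠ E) : update x E.1.2 (x E.1.1) e.1.1 ≠ update x E.1.2 (x E.1.1) e.1.2 := by
  obtain ⟨⟨a, b⟩, hab : a < b⟩ := e
  obtain ⟨⟨i, j⟩, hij : i < j⟩ := E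
  simp only [update_apply, ne_eq, Subtype.mk.injEq, Prod.mk.injEq] at he ⊢
  split_ifs <;> simp_all [hx.eq_iff] <;> omega

lemma injective_update {x : Fin n → Fin d → ℝ} (hx : Injective x) {j : Fin n} {y : Fin d → ℝ}
    (hy : y ∉ x '' {m | m ≠ j}) : Injective (update x j y) := by
  intro a b hab
  by_cases ha : a = j <;> by_cases hb : b = j
  · rw [ha, hb]
  · rw [ha, update_self, update_of_ne hb] at hab
    exact absurd ⟨b, hb, hab.symm⟩ hy
  · rw [hb, update_self, update_of_ne ha] at hab
    exact absurd ⟨a, ha, hab⟩ hy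
  · exact hx (by rwa [update_of_ne ha, update_of_ne hb] at hab)

theorem eq_zero_of_forall_sum_mul_edgeLength_update_eq_zero (hd : d ≠ 0)
    {x : Fin n → Fin d → ℝ} (hx : Injective x) (w : Edge n → ℝ) (E : Edge n)
    (h : ∀ y, ∑ e, w e * edgeLength (update x E.1.2 y) e = 0) : w E = 0 := by
  set L : ℝ → Fin n → Fin d → ℝ := fun t => update x E.1.2 (fun a => x E.1.1 a + t)
  set φ : ℝ → ℝ := fun t => ∑ e ∈ univ.erase E, w e * edgeLength (L t) e
  have hφ : DifferentiableAt ℝ φ 0 := by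
    refine DifferentiableAt.fun_sum fun e he => DifferentiableAt.const_mul ?_ _
    have hL : ContDiffAt ℝ 1 L 0 := (contDiff_update 1 x E.1.2).contDiffAt.comp 0 (by fun_prop)
    refine ((contDiffAt_edgeLength ?_).comp 0 hL).differentiableAt one_ne_zero
    simpa [L] using update_apply_ne_of_ne hx (ne_of_mem_erase he)
  have habs : ∀ t, w E * √d * |t| = -φ t := fun t => by
    have := h (fun a => x E.1.1 a + t)
    rw [← add_sum_erase _ _ (mem_univ E), edgeLength_update_add_const] at this
    linarith
  by_contra hw
  have hwd : w E * √d ≠ 0 := mul_ne_zero hw (by positivity)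
  refine not_differentiableAt_abs_zero ?_
  have : (abs : ℝ → ℝ) = fun t => -φ t / (w E * √d) := funext fun t => by
    rw [← habs, mul_div_cancel_left₀ _ hwd]
  exact this ▸ hφ.neg.div_const _

theorem sum_mul_edgeLength_update_eq_zero_of_nonempty_interior (hd : 2 ≤ d)
    {x : Fin n → Fin d → ℝ} (hx : Injective x) (w : Edge n → ℝ) (j : Fin n)
    (h : (interior {y | ∑ e, w e * edgeLength (update x j y) e = 0}).Nonempty) (y : Fin d → ℝ) :
    ∑ e, w e * edgeLength (update x j y) e = 0 := by
  set g : (Fin d → ℝ) → ℝ := fun y => ∑ e, w e * edgeLength (update x j y) e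
  have : Nonempty (Fin d) := ⟨⟨0, by omega⟩⟩
  have hS : (x '' {m | m ≠ j}).Countable := ((Set.toFinite _).image x).countable
  have hrank : 1 < Module.rank ℝ (Fin d → ℝ) := by
    rw [rank_fun', Fintype.card_fin]; exact_mod_cast hd
  have hg : AnalyticOnNhd ℝ g (x '' {m | m ≠ j})ᶜ := fun y hy =>
    (Finset.analyticAt_fun_sum _ fun e _ => analyticAt_const.mul <| ContDiffAt.analyticAt <|
      (contDiffAt_edgeLength ((injective_update hx hy).ne e.2.ne)).comp y
        (contDiff_update _ x j).contDiffAt)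
  obtain ⟨y₀, hy₀, hy₀S⟩ := (hS.dense_compl ℝ).inter_open_nonempty _ isOpen_interior h
  have hzero : Set.EqOn g 0 (x '' {m | m ≠ j})ᶜ :=
    hg.eqOn_zero_of_preconnected_of_eventuallyEq_zero
      (hS.isConnected_compl_of_one_lt_rank hrank).isPreconnected hy₀S
      (mem_interior_iff_mem_nhds.1 hy₀)
  exact congrFun (Continuous.ext_on (hS.dense_compl ℝ) (by fun_prop) continuous_const hzero) y

theorem exists_nonempty_interior_of_prod_eq_zero {X ι M : Type*} [TopologicalSpace X]
    [BaireSpace X] [Nonempty X] [Fintype ι] [CommMonoidWithZero M] [NoZeroDivisors M]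
    [Nontrivial M] [TopologicalSpace M] [T2Space M] {f : ι → X → M}
    (hf : ∀ i, Continuous (f i)) (h : ∀ x, ∏ i, f i x = 0) :
    ∃ i, (interior {x | f i x = 0}).Nonempty :=
  nonempty_interior_of_iUnion_of_closed (fun i => isClosed_eq (hf i) continuous_const)
    (Set.eq_univ_of_forall fun x => by simpa using prod_eq_zero_iff.1 (h x))

theorem exists_eq_zero_of_forall_prod_sum_mul_edgeLength_eq_zero (hd : 2 ≤ d)
    {x : Fin n → Fin d → ℝ} (hx : Injective x) {ι : Type*} [Fintype ι] (w : ι → Edge n → ℝ)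
    (h : ∀ x' : Fin n → Fin d → ℝ, ∏ i, ∑ e, w i e * edgeLength x' e = 0) (E : Edge n) :
    ∃ i, w i E = 0 := by
  obtain ⟨i, hi⟩ := exists_nonempty_interior_of_prod_eq_zero
    (f := fun i y => ∑ e, w i e * edgeLength (update x E.1.2 y) e)
    (fun i => by fun_prop) (fun y => h _)
  exact ⟨i, eq_zero_of_forall_sum_mul_edgeLength_update_eq_zero (by omega) hx (w i) E
    (sum_mul_edgeLength_update_eq_zero_of_nonempty_interior hd hx (w i) E.1.2 hi)⟩

end Geometry

section Configurations

variable {n d : ℕ}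

def sqDistPoly (d : ℕ) (e : Edge n) : MvPolynomial (Fin n × Fin d) ℚ :=
  ∑ a, (X (e.1.1, a) - X (e.1.2, a)) ^ 2

lemma sqrt_aeval_sqDistPoly (x : Fin n → Fin d → ℝ) (e : Edge n) :
    √(aeval (uncurry x) (sqDistPoly d e)) = edgeLength x e := by
  simp [sqDistPoly, edgeLength]

theorem IsGeneric.prod_sum_patternSign_mul_edgeLength_eq_zero {p : Fin n → Fin d → ℝ}
    (hp : IsGeneric (uncurry p)) (β : Edge n → ℚ) (h : ∑ e, (β e : ℝ) * edgeLength p e = 0)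
    (x : Fin n → Fin d → ℝ) :
    ∏ T : Finset (Edge n), ∑ e, ((patternSign T e * β e : ℚ) : ℝ) * edgeLength x e = 0 := by
  simpa [sqrt_aeval_sqDistPoly] using hp.prod_sum_patternSign_mul_sqrt_eq_zero (sqDistPoly d)
    (fun x e => by simp only [sqDistPoly, map_sum, map_pow]; positivity) β
    (by simpa [sqrt_aeval_sqDistPoly] using h) (uncurry x)

theorem IsGeneric.injective (hd : d ≠ 0) {p : Fin n → Fin d → ℝ} (hp : IsGeneric (uncurry p)) :
    Injective p := by
  intro i j hij
  by_contra hne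
  let a : Fin d := ⟨0, Nat.pos_of_ne_zero hd⟩
  refine hp (X (i, a) - X (j, a))
    (sub_ne_zero.2 fun h => hne (congrArg Prod.fst (X_injective h))) ?_
  simp [hij]

end Configurations

theorem stmt16_general {d n k : ℕ} (hd : 2 ≤ d)
    (p : Fin n → Fin d → ℝ)
    (hgen : ∀ f : MvPolynomial (Fin n × Fin d) ℚ, f ≠ 0 →
      eval (fun x => p x.1 x.2) (map (algebraMap ℚ ℝ) f) ≠ 0)
    (α : Fin k → Edge n → ℚ)
    (v : Fin k → ℝ)
    (hv : ∀ i, v i = ∑ e, (α i e : ℝ) *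
      Real.sqrt (∑ a, (p e.1.1 a - p e.1.2 a) ^ 2))
    (c : Fin k → ℚ)
    (hrel : ∑ i, (c i : ℝ) * v i = 0) :
    ∑ i, c i • α i = 0 := by
  have hp : IsGeneric (uncurry p) := fun f hf => by
    rw [aeval_def, ← eval_map]
    exact hgen f hf
  set β : Edge n → ℚ := ∑ i, c i • α i
  have hβ : ∑ e, (β e : ℝ) * edgeLength p e = 0 := by
    rw [← hrel]
    simp only [β, hv, edgeLength, Finset.sum_apply, Pi.smul_apply, smul_eq_mul, Rat.cast_sum,
      Rat.cast_mul, sum_mul, mul_sum, mul_assoc]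
    exact sum_comm
  ext E
  obtain ⟨T, hT⟩ := exists_eq_zero_of_forall_prod_sum_mul_edgeLength_eq_zero hd
    (hp.injective (by omega)) _ (hp.prod_sum_patternSign_mul_edgeLength_eq_zero β hβ) E
  exact (mul_eq_zero.1 (by exact_mod_cast hT)).resolve_left (patternSign_ne_zero T E)

/-- For a generic configuration `p` of `n` points in `ℝ^d` (`d ≥ 2`), a
nontrivial rational relation among the values `vᵢ = ⟨αᵢ, l(p)⟩` of rational
length functionals forces the same relation among the functionals: `∑ cⁱαᵢ = 0`. -/
theorem stmt16 {d n k : ℕ} (hd : 2 ≤ d)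
    (p : Fin n → Fin d → ℝ)
    (hgen : ∀ f : MvPolynomial (Fin n × Fin d) ℚ, f ≠ 0 →
      eval (fun x => p x.1 x.2) (map (algebraMap ℚ ℝ) f) ≠ 0)
    (α : Fin k → Edge n → ℚ)
    (v : Fin k → ℝ)
    (hv : ∀ i, v i = ∑ e, (α i e : ℝ) *
      Real.sqrt (∑ a, (p e.1.1 a - p e.1.2 a) ^ 2))
    (c : Fin k → ℚ) (hc : c ≠ 0)
    (hrel : ∑ i, (c i : ℝ) * v i = 0) :
    ∑ i, c i • α i = 0 :=
  stmt16_general hd p hgen α v hv c hrel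
end
end
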